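/- Let (Ω,𝓕,μ) be a probability space, W : Ω → ℝ^{d_w}, Y : Ω → ℝ^{d_y}, Z : Ω → ℝ^{d_z} Borel-measurable random vectors, and f_W : ℝ^{d_w} → ℝ a bounded Borel-measurable function with f_W(W) > 0 μ-almost surely. Then the following are equivalent: (i) for every y ∈ ℝ^{d_y} and z ∈ ℝ^{d_z}, F_{Y,Z|W}(y,z|W) = F_{Y|W}(y|W) · F_{Z|W}(z|W) μ-almost everywhere; (ii) for every w ∈ ℝ^{d_w}, y ∈ ℝ^{d_y} and z ∈ ℝ^{d_z}, E[1(W ≤ w) · 1(Y ≤ y) · (1(Z ≤ z) − F_{Z|W}(z|W)) · f_W(W)] = 0. -/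

import Mathlib

open MeasureTheory ProbabilityTheory

/-- Lower orthants are measurable in `Fin d → ℝ`. -/
lemma aux_measurableSet_Iic {d : ℕ} (v : Fin d → ℝ) : MeasurableSet (Set.Iic v) := by
  have h : Set.Iic v = ⋂ i, (fun u : Fin d → ℝ => u i) ⁻¹' Set.Iic (v i) := by
    ext u
    simp [Pi.le_def]
  rw [h]
  exact MeasurableSet.iInter fun i => (measurable_pi_apply i) measurableSet_Iic

/-- The Borel σ-algebra on `Fin d → ℝ` is generated by the lower orthants. -/
lemma aux_generateFrom_Iic (d : ℕ) :
    (inferInstance : MeasurableSpace (Fin d → ℝ)) =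
      MeasurableSpace.generateFrom
        (Set.range (Set.Iic : (Fin d → ℝ) → Set (Fin d → ℝ))) := by
  have hspan : IsCountablySpanning (Set.range (Set.Iic : ℝ → Set ℝ)) := by
    refine ⟨fun n => Set.Iic (n : ℝ), fun n => ⟨(n : ℝ), rfl⟩, ?_⟩
    ext x
    simp only [Set.mem_iUnion, Set.mem_Iic, Set.mem_univ, iff_true]
    exact exists_nat_ge x
  have h1 : ∀ _i : Fin d,
      MeasurableSpace.generateFrom (Set.range (Set.Iic : ℝ → Set ℝ)) =
        (inferInstance : MeasurableSpace ℝ) :=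
    fun _ => (borel_eq_generateFrom_Iic ℝ).symm
  have H := generateFrom_eq_pi (C := fun _ : Fin d => Set.range (Set.Iic : ℝ → Set ℝ))
    (fun i => h1 i) (fun _ => hspan)
  have hset : Set.pi Set.univ '' Set.pi Set.univ
        (fun _ : Fin d => Set.range (Set.Iic : ℝ → Set ℝ)) =
      Set.range (Set.Iic : (Fin d → ℝ) → Set (Fin d → ℝ)) := by
    ext s
    constructor
    · rintro ⟨t, ht, rfl⟩
      choose w hw using fun i => ht i (Set.mem_univ i)
      refine ⟨w, ?_⟩
      ext u
      simp only [Set.mem_Iic, Set.mem_pi, Set.mem_univ, forall_true_left, Pi.le_def]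
      refine forall_congr' fun i => ?_
      rw [← hw i]
      simp
    · rintro ⟨w, rfl⟩
      refine ⟨fun i => Set.Iic (w i), fun i _ => ⟨w i, rfl⟩, ?_⟩
      ext u
      simp [Set.mem_pi, Pi.le_def]
  calc (inferInstance : MeasurableSpace (Fin d → ℝ))
      = MeasurableSpace.pi := rfl
    _ = MeasurableSpace.generateFrom (Set.pi Set.univ '' Set.pi Set.univ
          (fun _ : Fin d => Set.range (Set.Iic : ℝ → Set ℝ))) := H.symm
    _ = MeasurableSpace.generateFrom
          (Set.range (Set.Iic : (Fin d → ℝ) → Set (Fin d → ℝ))) := by rw [hset]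

/-- The σ-algebra generated by `W` (not an instance). -/
def mw {Ω : Type*} {dw : ℕ} (W : Ω → (Fin dw → ℝ)) : MeasurableSpace Ω :=
  MeasurableSpace.comap W inferInstance

/-- Pull-out property in integral form: for a bounded `m`-strongly-measurable `f` and an
integrable `g`, `∫ f·g = ∫ f·E[g|m]`. -/
lemma aux_pullout {Ω : Type*} [mΩ : MeasurableSpace Ω] (μ : Measure Ω) [IsFiniteMeasure μ]
    {m : MeasurableSpace Ω} (hm : m ≤ mΩ) {f g : Ω → ℝ}
    (hf : StronglyMeasurable[m] f) {c : ℝ} (hfb : ∀ᵐ ω ∂μ, ‖f ω‖ ≤ c)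
    (hg : Integrable g μ) :
    ∫ ω, f ω * g ω ∂μ = ∫ ω, f ω * (μ[g|m]) ω ∂μ := by
  have h := condExp_stronglyMeasurable_mul_of_bound hm hf hg c hfb
  calc ∫ ω, f ω * g ω ∂μ
      = ∫ ω, (μ[f * g|m]) ω ∂μ := (integral_condExp hm).symm
    _ = ∫ ω, f ω * (μ[g|m]) ω ∂μ := integral_congr_ae h

/-- If an `m := σ(W)`-strongly measurable integrable function has vanishing integral over all
lower orthant events `{W ≤ w}`, then it vanishes a.e. -/
lemma aux_ae_zero {Ω : Type*} [mΩ : MeasurableSpace Ω] (μ : Measure Ω) [IsProbabilityMeasure μ]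
    {dw : ℕ} {W : Ω → Fin dw → ℝ} (hW : Measurable W)
    {h : Ω → ℝ}
    (hsm : StronglyMeasurable[mw W] h)
    (hint : Integrable h μ)
    (h0 : ∀ w : Fin dw → ℝ, ∫ ω in {ω' | W ω' ≤ w}, h ω ∂μ = 0) :
    h =ᵐ[μ] 0 := by
  have hm : mw W ≤ mΩ := hW.comap_le
  have hm_eq : mw W = MeasurableSpace.generateFrom
      (Set.range fun w : Fin dw → ℝ => W ⁻¹' Set.Iic w) := by
    unfold mw
    rw [aux_generateFrom_Iic dw, MeasurableSpace.comap_generateFrom]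
    congr 1
    rw [← Set.range_comp]
    rfl
  have hPi : IsPiSystem (Set.range fun w : Fin dw → ℝ => W ⁻¹' Set.Iic w) := by
    rintro _ ⟨w₁, rfl⟩ _ ⟨w₂, rfl⟩ -
    refine ⟨w₁ ⊓ w₂, ?_⟩
    show W ⁻¹' Set.Iic (w₁ ⊓ w₂) = W ⁻¹' Set.Iic w₁ ∩ W ⁻¹' Set.Iic w₂
    rw [← Set.Iic_inter_Iic, Set.preimage_inter]
  have h0' : ∀ w : Fin dw → ℝ, ∫ ω in W ⁻¹' Set.Iic w, h ω ∂μ = 0 := fun w => h0 w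
  -- total integral vanishes
  have huniv0 : ∫ ω, h ω ∂μ = 0 := by
    set T : ℕ → Set Ω := fun n => W ⁻¹' Set.Iic (fun _ => (n : ℝ)) with hT
    have hTmeas : ∀ n, MeasurableSet[mΩ] (T n) := fun n => hW (aux_measurableSet_Iic _)
    have hTmono : Monotone T := by
      intro a b hab
      exact Set.preimage_mono (Set.Iic_subset_Iic.mpr fun i => by exact Nat.cast_le.mpr hab)
    have hTunion : ⋃ n, T n = Set.univ := by
      ext ω
      simp only [hT, Set.mem_iUnion, Set.mem_preimage, Set.mem_Iic, Set.mem_univ, iff_true,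
        Pi.le_def]
      obtain ⟨n, hn⟩ := exists_nat_ge (∑ i, |W ω i|)
      exact ⟨n, fun i => le_trans (le_trans (le_abs_self _)
        (Finset.single_le_sum (fun j _ => abs_nonneg (W ω j)) (Finset.mem_univ i))) hn⟩
    have ht := tendsto_setIntegral_of_monotone hTmeas hTmono
      (by rw [hTunion]; exact hint.integrableOn)
    have hval : (fun n => ∫ ω in T n, h ω ∂μ) = fun _ => (0 : ℝ) :=
      funext fun n => h0' _
    rw [hval] at ht
    have hlim : ∫ ω in ⋃ n, T n, h ω ∂μ = 0 :=
      tendsto_nhds_unique ht tendsto_const_nhds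
    rwa [hTunion, setIntegral_univ] at hlim
  -- all `m`-measurable sets
  have hall : ∀ s : Set Ω, MeasurableSet[mw W] s → ∫ ω in s, h ω ∂μ = 0 := by
    intro s hs
    refine MeasurableSpace.induction_on_inter (m := mw W)
      (C := fun s _ => ∫ ω in s, h ω ∂μ = 0) hm_eq hPi ?_ ?_ ?_ ?_ s hs
    · simp
    · rintro t ⟨w, rfl⟩
      exact h0' w
    · intro t htm h0t
      have hadd := integral_add_compl (hm _ htm) hint
      rw [h0t, huniv0] at hadd
      linarith
    · intro f hdisj hfm h0f
      rw [integral_iUnion (fun i => hm _ (hfm i)) hdisj hint.integrableOn]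
      simp [h0f]
  exact ae_eq_zero_of_forall_setIntegral_eq_of_finStronglyMeasurable_trim hm
    (fun s _ _ => hint.integrableOn) (fun s hs _ => hall s hs)
    (hsm.finStronglyMeasurable (μ.trim hm))

/-- With a bounded measurable weight `f_W` satisfying `f_W(W) > 0` a.s., the
a.e. factorization of conditional CDFs for all `(y,z)` is equivalent to the density-weighted
unconditional moment restrictions `E[1(W≤w)·1(Y≤y)·(1(Z≤z) − F_{Z|W}(z|W))·f_W(W)] = 0`
for all `(w,y,z)`. -/
theorem stmt_5 {Ω : Type*} [mΩ : MeasurableSpace Ω]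
    (μ : Measure Ω) [IsProbabilityMeasure μ]
    {dw dy dz : ℕ} (W : Ω → (Fin dw → ℝ)) (Y : Ω → (Fin dy → ℝ)) (Z : Ω → (Fin dz → ℝ))
    (fW : (Fin dw → ℝ) → ℝ)
    (hW : Measurable W) (hY : Measurable Y) (hZ : Measurable Z)
    (hfW : Measurable fW) (hfWbdd : ∃ C : ℝ, ∀ u, |fW u| ≤ C)
    (hfWpos : ∀ᵐ ω ∂μ, 0 < fW (W ω)) :
    (∀ (y : Fin dy → ℝ) (z : Fin dz → ℝ),
        μ[fun ω => Set.indicator {ω' | Y ω' ≤ y} (fun _ => (1 : ℝ)) ω *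
              Set.indicator {ω' | Z ω' ≤ z} (fun _ => (1 : ℝ)) ω |
            MeasurableSpace.comap W inferInstance]
          =ᵐ[μ]
        fun ω =>
          (μ[Set.indicator {ω' | Y ω' ≤ y} (fun _ => (1 : ℝ)) |
              MeasurableSpace.comap W inferInstance]) ω *
          (μ[Set.indicator {ω' | Z ω' ≤ z} (fun _ => (1 : ℝ)) |
              MeasurableSpace.comap W inferInstance]) ω) ↔
    (∀ (w : Fin dw → ℝ) (y : Fin dy → ℝ) (z : Fin dz → ℝ),
        ∫ ω, Set.indicator {ω' | W ω' ≤ w} (fun _ => (1 : ℝ)) ω *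
            Set.indicator {ω' | Y ω' ≤ y} (fun _ => (1 : ℝ)) ω *
            (Set.indicator {ω' | Z ω' ≤ z} (fun _ => (1 : ℝ)) ω -
              (μ[Set.indicator {ω' | Z ω' ≤ z} (fun _ => (1 : ℝ)) |
                  MeasurableSpace.comap W inferInstance]) ω) *
            fW (W ω) ∂μ = 0) := by
  classical
  obtain ⟨C, hC⟩ := hfWbdd
  have hC0 : 0 ≤ C := (abs_nonneg _).trans (hC (fun _ => 0))
  have hm : mw W ≤ mΩ := hW.comap_le
  have hWm : Measurable[mw W] W := measurable_iff_comap_le.mpr le_rfl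
  -- measurability of the orthant events
  have hYset : ∀ y : Fin dy → ℝ, MeasurableSet[mΩ] {ω' | Y ω' ≤ y} :=
    fun y => hY (aux_measurableSet_Iic y)
  have hZset : ∀ z : Fin dz → ℝ, MeasurableSet[mΩ] {ω' | Z ω' ≤ z} :=
    fun z => hZ (aux_measurableSet_Iic z)
  have hWmset : ∀ w : Fin dw → ℝ, MeasurableSet[mw W] {ω' | W ω' ≤ w} := by
    intro w
    exact MeasurableSpace.measurableSet_comap.mpr ⟨Set.Iic w, aux_measurableSet_Iic w, rfl⟩
  have hWset : ∀ w : Fin dw → ℝ, MeasurableSet[mΩ] {ω' | W ω' ≤ w} := fun w => hm _ (hWmset w)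
  -- generic facts about 0/1 indicators
  have ind_norm : ∀ (s : Set Ω) (ω : Ω), ‖Set.indicator s (fun _ => (1 : ℝ)) ω‖ ≤ 1 := by
    intro s ω
    by_cases hω : ω ∈ s <;> simp [Set.indicator_apply, hω]
  have ind_int : ∀ (s : Set Ω), MeasurableSet[mΩ] s →
      Integrable (Set.indicator s (fun _ => (1 : ℝ))) μ :=
    fun s hs => (integrable_const (1 : ℝ)).indicator hs
  -- conditional CDF of Z: a.e. bound by 1
  have hcB_bdd : ∀ z : Fin dz → ℝ, ∀ᵐ ω ∂μ,
      ‖(μ[Set.indicator {ω' | Z ω' ≤ z} (fun _ => (1 : ℝ)) | MeasurableSpace.comap W inferInstance]) ω‖ ≤ 1 := by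
    intro z
    have := ae_bdd_condExp_of_ae_bdd (m := MeasurableSpace.comap W inferInstance) (μ := μ) (R := 1)
      (f := Set.indicator {ω' | Z ω' ≤ z} (fun _ => (1 : ℝ)))
      (Filter.Eventually.of_forall fun ω => by
        simpa [Real.norm_eq_abs] using ind_norm {ω' | Z ω' ≤ z} ω)
    filter_upwards [this] with ω hω
    simpa [Real.norm_eq_abs] using hω
  have hcA_bdd : ∀ y : Fin dy → ℝ, ∀ᵐ ω ∂μ,
      ‖(μ[Set.indicator {ω' | Y ω' ≤ y} (fun _ => (1 : ℝ)) | MeasurableSpace.comap W inferInstance]) ω‖ ≤ 1 := by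
    intro y
    have := ae_bdd_condExp_of_ae_bdd (m := MeasurableSpace.comap W inferInstance) (μ := μ) (R := 1)
      (f := Set.indicator {ω' | Y ω' ≤ y} (fun _ => (1 : ℝ)))
      (Filter.Eventually.of_forall fun ω => by
        simpa [Real.norm_eq_abs] using ind_norm {ω' | Y ω' ≤ y} ω)
    filter_upwards [this] with ω hω
    simpa [Real.norm_eq_abs] using hω
  -- KEY: the moment integral equals a set integral of the conditional discrepancy
  have key : ∀ (w : Fin dw → ℝ) (y : Fin dy → ℝ) (z : Fin dz → ℝ),
      (∫ ω, Set.indicator {ω' | W ω' ≤ w} (fun _ => (1 : ℝ)) ω *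
            Set.indicator {ω' | Y ω' ≤ y} (fun _ => (1 : ℝ)) ω *
            (Set.indicator {ω' | Z ω' ≤ z} (fun _ => (1 : ℝ)) ω -
              (μ[Set.indicator {ω' | Z ω' ≤ z} (fun _ => (1 : ℝ)) | MeasurableSpace.comap W inferInstance]) ω) *
            fW (W ω) ∂μ)
        = ∫ ω in {ω' | W ω' ≤ w}, fW (W ω) *
            ((μ[fun ω => Set.indicator {ω' | Y ω' ≤ y} (fun _ => (1 : ℝ)) ω *
                Set.indicator {ω' | Z ω' ≤ z} (fun _ => (1 : ℝ)) ω | MeasurableSpace.comap W inferInstance]) ω -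
              (μ[Set.indicator {ω' | Y ω' ≤ y} (fun _ => (1 : ℝ)) | MeasurableSpace.comap W inferInstance]) ω *
              (μ[Set.indicator {ω' | Z ω' ≤ z} (fun _ => (1 : ℝ)) | MeasurableSpace.comap W inferInstance]) ω) ∂μ := by
    intro w y z
    set IA := Set.indicator {ω' | Y ω' ≤ y} (fun _ => (1 : ℝ)) with hIA
    set IB := Set.indicator {ω' | Z ω' ≤ z} (fun _ => (1 : ℝ)) with hIB
    set IW := Set.indicator {ω' | W ω' ≤ w} (fun _ => (1 : ℝ)) with hIW
    set cA := μ[IA | MeasurableSpace.comap W inferInstance] with hcA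
    set cB := μ[IB | MeasurableSpace.comap W inferInstance] with hcB
    set cAB := μ[fun ω => IA ω * IB ω | MeasurableSpace.comap W inferInstance] with hcAB
    set g1 : Ω → ℝ := fun ω => IW ω * fW (W ω) with hg1
    have hIA_int : Integrable IA μ := ind_int _ (hYset y)
    have hIB_int : Integrable IB μ := ind_int _ (hZset z)
    have hAB_int : Integrable (fun ω => IA ω * IB ω) μ :=
      hIB_int.bdd_mul hIA_int.1 (Filter.Eventually.of_forall (ind_norm _))
    have hg1_sm : StronglyMeasurable[mw W] g1 :=
      (stronglyMeasurable_const.indicator (hWmset w)).mul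
        ((hfW.comp hWm).stronglyMeasurable)
    have hg1_bdd : ∀ ω, ‖g1 ω‖ ≤ C := by
      intro ω
      rw [hg1]
      calc ‖IW ω * fW (W ω)‖ = ‖IW ω‖ * ‖fW (W ω)‖ := norm_mul _ _
        _ ≤ 1 * C := by
            refine mul_le_mul (ind_norm _ _) ?_ (norm_nonneg _) zero_le_one
            rw [Real.norm_eq_abs]; exact hC _
        _ = C := one_mul C
    have hg1_asm : AEStronglyMeasurable g1 μ := (hg1_sm.mono hm).aestronglyMeasurable
    have hg1cB_sm : StronglyMeasurable[mw W] (fun ω => g1 ω * cB ω) :=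
      hg1_sm.mul stronglyMeasurable_condExp
    have hg1cB_bdd : ∀ᵐ ω ∂μ, ‖g1 ω * cB ω‖ ≤ C := by
      filter_upwards [hcB_bdd z] with ω hω
      calc ‖g1 ω * cB ω‖ = ‖g1 ω‖ * ‖cB ω‖ := norm_mul _ _
        _ ≤ C * 1 := mul_le_mul (hg1_bdd ω) hω (norm_nonneg _) hC0
        _ = C := mul_one C
    have hg1cB_asm : AEStronglyMeasurable (fun ω => g1 ω * cB ω) μ :=
      (hg1cB_sm.mono hm).aestronglyMeasurable
    have int1 : Integrable (fun ω => g1 ω * (IA ω * IB ω)) μ :=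
      hAB_int.bdd_mul hg1_asm (Filter.Eventually.of_forall hg1_bdd)
    have int2 : Integrable (fun ω => g1 ω * cB ω * IA ω) μ :=
      hIA_int.bdd_mul hg1cB_asm hg1cB_bdd
    have int3 : Integrable (fun ω => g1 ω * cAB ω) μ :=
      integrable_condExp.bdd_mul hg1_asm (Filter.Eventually.of_forall hg1_bdd)
    have int4 : Integrable (fun ω => g1 ω * cB ω * cA ω) μ :=
      integrable_condExp.bdd_mul hg1cB_asm hg1cB_bdd
    have step1 : ∫ ω, g1 ω * (IA ω * IB ω) ∂μ = ∫ ω, g1 ω * cAB ω ∂μ :=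
      aux_pullout μ hm hg1_sm (Filter.Eventually.of_forall hg1_bdd) hAB_int
    have step2 : ∫ ω, g1 ω * cB ω * IA ω ∂μ = ∫ ω, g1 ω * cB ω * cA ω ∂μ :=
      aux_pullout μ hm hg1cB_sm hg1cB_bdd hIA_int
    have expand : ∀ ω, IW ω * IA ω * (IB ω - cB ω) * fW (W ω)
        = g1 ω * (IA ω * IB ω) - g1 ω * cB ω * IA ω := by
      intro ω
      rw [hg1]
      ring
    have ptw : ∀ ω, Set.indicator {ω' | W ω' ≤ w}
          (fun ω => fW (W ω) * (cAB ω - cA ω * cB ω)) ω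
        = g1 ω * cAB ω - g1 ω * cB ω * cA ω := by
      intro ω
      simp only [hg1, hIW]
      by_cases hω : ω ∈ {ω' | W ω' ≤ w}
      · simp only [Set.indicator_of_mem hω]
        ring
      · simp only [Set.indicator_of_notMem hω]
        ring
    calc ∫ ω, IW ω * IA ω * (IB ω - cB ω) * fW (W ω) ∂μ
        = ∫ ω, (g1 ω * (IA ω * IB ω) - g1 ω * cB ω * IA ω) ∂μ :=
          integral_congr_ae (Filter.Eventually.of_forall expand)
      _ = (∫ ω, g1 ω * (IA ω * IB ω) ∂μ) - ∫ ω, g1 ω * cB ω * IA ω ∂μ :=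
          integral_sub int1 int2
      _ = (∫ ω, g1 ω * cAB ω ∂μ) - ∫ ω, g1 ω * cB ω * cA ω ∂μ := by rw [step1, step2]
      _ = ∫ ω, (g1 ω * cAB ω - g1 ω * cB ω * cA ω) ∂μ := (integral_sub int3 int4).symm
      _ = ∫ ω, Set.indicator {ω' | W ω' ≤ w}
            (fun ω => fW (W ω) * (cAB ω - cA ω * cB ω)) ω ∂μ :=
          integral_congr_ae (Filter.Eventually.of_forall fun ω => (ptw ω).symm)
      _ = ∫ ω in {ω' | W ω' ≤ w}, fW (W ω) * (cAB ω - cA ω * cB ω) ∂μ :=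
          integral_indicator (hWset w)
  constructor
  · -- (i) ⇒ (ii)
    intro H w y z
    rw [key w y z]
    have hae : (fun ω => fW (W ω) *
          ((μ[fun ω => Set.indicator {ω' | Y ω' ≤ y} (fun _ => (1 : ℝ)) ω *
              Set.indicator {ω' | Z ω' ≤ z} (fun _ => (1 : ℝ)) ω | MeasurableSpace.comap W inferInstance]) ω -
            (μ[Set.indicator {ω' | Y ω' ≤ y} (fun _ => (1 : ℝ)) | MeasurableSpace.comap W inferInstance]) ω *
            (μ[Set.indicator {ω' | Z ω' ≤ z} (fun _ => (1 : ℝ)) | MeasurableSpace.comap W inferInstance]) ω))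
        =ᵐ[μ] (0 : Ω → ℝ) := by
      filter_upwards [H y z] with ω hω
      simp only [hω, sub_self, mul_zero, Pi.zero_apply]
    exact integral_eq_zero_of_ae (hae.filter_mono (ae_mono Measure.restrict_le_self))
  · -- (ii) ⇒ (i)
    intro H y z
    have hsm : StronglyMeasurable[mw W] (fun ω => fW (W ω) *
        ((μ[fun ω => Set.indicator {ω' | Y ω' ≤ y} (fun _ => (1 : ℝ)) ω *
            Set.indicator {ω' | Z ω' ≤ z} (fun _ => (1 : ℝ)) ω | MeasurableSpace.comap W inferInstance]) ω -
          (μ[Set.indicator {ω' | Y ω' ≤ y} (fun _ => (1 : ℝ)) | MeasurableSpace.comap W inferInstance]) ω *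
          (μ[Set.indicator {ω' | Z ω' ≤ z} (fun _ => (1 : ℝ)) | MeasurableSpace.comap W inferInstance]) ω)) :=
      ((hfW.comp hWm).stronglyMeasurable).mul
        (stronglyMeasurable_condExp.sub
          (stronglyMeasurable_condExp.mul stronglyMeasurable_condExp))
    have hint : Integrable (fun ω => fW (W ω) *
        ((μ[fun ω => Set.indicator {ω' | Y ω' ≤ y} (fun _ => (1 : ℝ)) ω *
            Set.indicator {ω' | Z ω' ≤ z} (fun _ => (1 : ℝ)) ω | MeasurableSpace.comap W inferInstance]) ω -
          (μ[Set.indicator {ω' | Y ω' ≤ y} (fun _ => (1 : ℝ)) | MeasurableSpace.comap W inferInstance]) ω *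
          (μ[Set.indicator {ω' | Z ω' ≤ z} (fun _ => (1 : ℝ)) | MeasurableSpace.comap W inferInstance]) ω)) μ := by
      have inner : Integrable (fun ω =>
          (μ[fun ω => Set.indicator {ω' | Y ω' ≤ y} (fun _ => (1 : ℝ)) ω *
              Set.indicator {ω' | Z ω' ≤ z} (fun _ => (1 : ℝ)) ω | MeasurableSpace.comap W inferInstance]) ω -
            (μ[Set.indicator {ω' | Y ω' ≤ y} (fun _ => (1 : ℝ)) | MeasurableSpace.comap W inferInstance]) ω *
            (μ[Set.indicator {ω' | Z ω' ≤ z} (fun _ => (1 : ℝ)) | MeasurableSpace.comap W inferInstance]) ω) μ :=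
        integrable_condExp.sub (integrable_condExp.bdd_mul
          (stronglyMeasurable_condExp.mono hm).aestronglyMeasurable (hcA_bdd y))
      exact inner.bdd_mul (hfW.comp hW).aestronglyMeasurable
        (Filter.Eventually.of_forall fun ω => by
          rw [Real.norm_eq_abs]; exact hC _)
    have hzero := aux_ae_zero μ hW hsm hint
      (fun w => (key w y z).symm.trans (H w y z))
    filter_upwards [hzero, hfWpos] with ω h1 h2
    have h3 : (μ[fun ω => Set.indicator {ω' | Y ω' ≤ y} (fun _ => (1 : ℝ)) ω *
          Set.indicator {ω' | Z ω' ≤ z} (fun _ => (1 : ℝ)) ω | MeasurableSpace.comap W inferInstance]) ω -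
        (μ[Set.indicator {ω' | Y ω' ≤ y} (fun _ => (1 : ℝ)) | MeasurableSpace.comap W inferInstance]) ω *
        (μ[Set.indicator {ω' | Z ω' ≤ z} (fun _ => (1 : ℝ)) | MeasurableSpace.comap W inferInstance]) ω = 0 := by
      have h1' : fW (W ω) *
          ((μ[fun ω => Set.indicator {ω' | Y ω' ≤ y} (fun _ => (1 : ℝ)) ω *
              Set.indicator {ω' | Z ω' ≤ z} (fun _ => (1 : ℝ)) ω | MeasurableSpace.comap W inferInstance]) ω -
            (μ[Set.indicator {ω' | Y ω' ≤ y} (fun _ => (1 : ℝ)) | MeasurableSpace.comap W inferInstance]) ω *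
            (μ[Set.indicator {ω' | Z ω' ≤ z} (fun _ => (1 : ℝ)) | MeasurableSpace.comap W inferInstance]) ω) = 0 := h1
      rcases mul_eq_zero.mp h1' with h | h
      · exact absurd h h2.ne'
      · exact h
    have := sub_eq_zero.mp h3
    simpa using this
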